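/- Let f be a smooth, rapidly decaying probability density on ℝ^d and s : ℝ^d → ℝ^d a smooth vector field with sufficient decay. Then ∫ ‖s(x) − ∇ log f(x)‖² f(x) dx = ∫ (‖s(x)‖² + 2 div s(x)) f(x) dx + ∫ ‖∇ log f(x)‖² f(x) dx. -/

import Mathlib

open MeasureTheory Real
open scoped RealInnerProductSpace

/-- Divergence of a vector field on `ℝ^d`. -/
noncomputable def diverg {d : ℕ} (s : EuclideanSpace ℝ (Fin d) → EuclideanSpace ℝ (Fin d))
    (x : EuclideanSpace ℝ (Fin d)) : ℝ :=
  ∑ i, fderiv ℝ s x (EuclideanSpace.single i 1) i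

/-- The score `∇ log f` of a density `f`. -/
noncomputable def score {d : ℕ} (f : EuclideanSpace ℝ (Fin d) → ℝ)
    (x : EuclideanSpace ℝ (Fin d)) : EuclideanSpace ℝ (Fin d) :=
  gradient (fun y => Real.log (f y)) x

/-- Integration-by-parts identity for the score-matching loss:
`∫ ‖s − ∇ log f‖² f = ∫ (‖s‖² + 2 div s) f + ∫ ‖∇ log f‖² f`. -/
theorem stmt0 {d : ℕ} (f : EuclideanSpace ℝ (Fin d) → ℝ)
    (s : EuclideanSpace ℝ (Fin d) → EuclideanSpace ℝ (Fin d))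
    (hf_smooth : ContDiff ℝ (⊤ : ℕ∞) f) (hf_pos : ∀ x, 0 < f x)
    (hf_prob : ∫ x, f x = 1)
    (hs_smooth : ContDiff ℝ (⊤ : ℕ∞) s)
    (h1 : Integrable (fun x => ‖s x - score f x‖ ^ 2 * f x))
    (h2 : Integrable (fun x => (‖s x‖ ^ 2 + 2 * diverg s x) * f x))
    (h3 : Integrable (fun x => ‖score f x‖ ^ 2 * f x))
    (h4 : Integrable (fun x => ⟪s x, score f x⟫ * f x))
    -- sufficient decay: the divergence theorem holds with vanishing boundary terms
    (hdecay : (∫ x, diverg (fun y => f y • s y) x) = 0) :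
    ∫ x, ‖s x - score f x‖ ^ 2 * f x
      = (∫ x, (‖s x‖ ^ 2 + 2 * diverg s x) * f x)
        + ∫ x, ‖score f x‖ ^ 2 * f x := by
  have hfd : ∀ x, DifferentiableAt ℝ f x := fun x =>
    (hf_smooth.differentiable (by simp)).differentiableAt
  have hsd : ∀ x, DifferentiableAt ℝ s x := fun x =>
    (hs_smooth.differentiable (by simp)).differentiableAt
  -- score = f⁻¹ • ∇f
  have hscore : ∀ x, score f x = (f x)⁻¹ • gradient f x := by
    intro x
    have h := (Real.hasDerivAt_log (hf_pos x).ne').comp_hasFDerivAt x (hfd x).hasFDerivAt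
    have h' := h.fderiv
    simp only [Function.comp_def] at h'
    unfold score gradient
    rw [h', _root_.map_smul]
  -- components of gradient
  have hgrad_comp : ∀ (x) (i : Fin d), fderiv ℝ f x (EuclideanSpace.single i 1)
      = gradient f x i := by
    intro x i
    have : ⟪gradient f x, EuclideanSpace.single i (1 : ℝ)⟫ = fderiv ℝ f x
        (EuclideanSpace.single i 1) := InnerProductSpace.toDual_symm_apply
    rw [EuclideanSpace.inner_single_right] at this
    simpa using this.symm
  -- cross term pointwise
  have hcrossf : ∀ x, ⟪s x, score f x⟫ * f x = ⟪s x, gradient f x⟫ := by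
    intro x
    rw [hscore, real_inner_smul_right, mul_comm ((f x)⁻¹) _, mul_assoc,
      inv_mul_cancel₀ (hf_pos x).ne', mul_one]
  -- divergence product rule
  have hdiv : ∀ x, diverg (fun y => f y • s y) x
      = ⟪s x, score f x⟫ * f x + diverg s x * f x := by
    intro x
    rw [hcrossf x]
    unfold diverg
    rw [fderiv_fun_smul (hfd x) (hsd x)]
    simp only [ContinuousLinearMap.add_apply, ContinuousLinearMap.coe_smul',
      Pi.smul_apply, ContinuousLinearMap.smulRight_apply, PiLp.add_apply,
      PiLp.smul_apply, smul_eq_mul]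
    rw [Finset.sum_add_distrib, ← Finset.mul_sum]
    have hinner : ⟪s x, gradient f x⟫
        = ∑ i, fderiv ℝ f x (EuclideanSpace.single i 1) * s x i := by
      simp only [hgrad_comp x, real_inner_comm (s x)]
      simp only [PiLp.inner_apply, RCLike.inner_apply, conj_trivial]
    rw [hinner]
    ring
  have hexp : ∀ x, ‖s x - score f x‖ ^ 2
      = ‖s x‖ ^ 2 - 2 * ⟪s x, score f x⟫ + ‖score f x‖ ^ 2 := fun x => by
    rw [@norm_sub_sq_real]
  -- integrability pieces
  have hA : Integrable (fun x => ‖s x‖ ^ 2 * f x) := by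
    have := (h1.add (h4.const_mul 2)).sub h3
    refine this.congr (Filter.Eventually.of_forall fun x => ?_)
    simp only [Pi.add_apply, Pi.sub_apply]
    rw [hexp x]; ring
  have hD : Integrable (fun x => diverg s x * f x) := by
    have := (h2.sub hA).const_mul (1/2)
    refine this.congr (Filter.Eventually.of_forall fun x => ?_)
    simp only [Pi.sub_apply]
    ring
  -- evaluate the decay integral
  have hsplit : (∫ x, ⟪s x, score f x⟫ * f x) + ∫ x, diverg s x * f x = 0 := by
    rw [← integral_add h4 hD, ← hdecay]
    exact integral_congr_ae (Filter.Eventually.of_forall fun x => (hdiv x).symm)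
  -- final computation
  have hL : ∫ x, ‖s x - score f x‖ ^ 2 * f x
      = (∫ x, ‖s x‖ ^ 2 * f x) - 2 * (∫ x, ⟪s x, score f x⟫ * f x)
        + ∫ x, ‖score f x‖ ^ 2 * f x := by
    have e0 : ∫ x, ‖s x - score f x‖ ^ 2 * f x
        = ∫ x, ((‖s x‖ ^ 2 * f x - 2 * (⟪s x, score f x⟫ * f x)) + ‖score f x‖ ^ 2 * f x) :=
      integral_congr_ae (Filter.Eventually.of_forall fun x => by simp only [hexp]; ring)
    have hAsub : Integrable (fun x => ‖s x‖ ^ 2 * f x - 2 * (⟪s x, score f x⟫ * f x)) :=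
      hA.sub (h4.const_mul 2)
    rw [e0, integral_add hAsub h3, integral_sub hA (h4.const_mul 2), integral_const_mul]
  have hR : (∫ x, (‖s x‖ ^ 2 + 2 * diverg s x) * f x)
      = (∫ x, ‖s x‖ ^ 2 * f x) + 2 * ∫ x, diverg s x * f x := by
    have e0 : (∫ x, (‖s x‖ ^ 2 + 2 * diverg s x) * f x)
        = ∫ x, (‖s x‖ ^ 2 * f x + 2 * (diverg s x * f x)) :=
      integral_congr_ae (Filter.Eventually.of_forall fun x => by ring)
    rw [e0, integral_add hA (hD.const_mul 2), integral_const_mul]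
  rw [hL, hR]
  linarith [hsplit]
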